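/- Let n ≥ 2 and let δ = a_{n,n−1} a_{n−1,n−2} ⋯ a_{2,1} ∈ B_n be the fundamental braid. Then for every pair of integers with n ≥ t > s ≥ 1, the element δ · a_{t,s}^{−1} lies in the submonoid of B_n generated by the band generators {a_{k,j} : n ≥ k > j ≥ 1}; equivalently, there is a positive word P_{t,s} in the band generators such that a_{t,s}^{−1} = δ^{−1} P_{t,s} in B_n. -/

import Mathlib

/-!
Writing `C(t, s) = σ_{t-1} ⋯ σ_{s+1}`, one has `δ = C(n, 0)`, and for `1 ≤ s < t ≤ n` this word
factors as `δ = C(n, t-1) · C(t-1, s-1) · a_{t,s} · C(s, 0)`, because the braid relations give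
the second conjugation form `a_{t,s} = W⁻¹ σ_{t-1} W` with `W = σ_{t-2} ⋯ σ_s`, i.e.
`σ_{t-1} ⋯ σ_s = W · a_{t,s}`. Hence `δ a_{t,s}⁻¹` is a positive word times the
conjugate `a_{t,s} C(s, 0) a_{t,s}⁻¹`. The band generator `a_{t,s}` commutes with
`σ_{s-2}, …, σ_1` and satisfies `a_{t,s} σ_{s-1} = a_{t,s-1} a_{t,s}`, so that conjugate equals
the positive word `a_{t,s-1} C(s-1, 0)` (or `1` when `s = 1`).
-/

/-- Relations for the Artin presentation of the braid group `B n`.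
Generators are indexed by `Fin (n-1)`, with index `i` representing `σ_{i+1}`. -/
def braidRels (n : ℕ) : Set (FreeGroup (Fin (n - 1))) :=
  { r | (∃ i j : Fin (n - 1), (i : ℕ) + 2 ≤ (j : ℕ) ∧
          r = FreeGroup.of i * FreeGroup.of j * (FreeGroup.of i)⁻¹ * (FreeGroup.of j)⁻¹) ∨
        (∃ i j : Fin (n - 1), (j : ℕ) = (i : ℕ) + 1 ∧
          r = FreeGroup.of i * FreeGroup.of j * FreeGroup.of i *
              (FreeGroup.of j * FreeGroup.of i * FreeGroup.of j)⁻¹) }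

/-- The braid group `B n` on `n` strands, as a presented group. -/
abbrev BraidGroup (n : ℕ) : Type := PresentedGroup (braidRels n)

/-- The Artin generator `σ_i` of `B n`, for `1 ≤ i ≤ n - 1` (junk value `1` otherwise). -/
def braidGen (n i : ℕ) : BraidGroup n :=
  if h : i - 1 < n - 1 then PresentedGroup.of ⟨i - 1, h⟩ else 1

/-- The conjugating word `σ_{t-1} σ_{t-2} ⋯ σ_{s+1}` used to define band generators. -/
def bandConj (n t s : ℕ) : BraidGroup n :=
  ((List.range (t - 1 - s)).map (fun k => braidGen n (t - 1 - k))).prod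

/-- The band generator `a_{t,s} = (σ_{t-1} ⋯ σ_{s+1}) σ_s (σ_{t-1} ⋯ σ_{s+1})⁻¹` of `B n`. -/
def band (n t s : ℕ) : BraidGroup n :=
  bandConj n t s * braidGen n s * (bandConj n t s)⁻¹

/-- The fundamental braid `δ = a_{n,n-1} a_{n-1,n-2} ⋯ a_{2,1}` in `B n`. -/
def fundamentalBraid (n : ℕ) : BraidGroup n :=
  ((List.range (n - 1)).map (fun k => band n (n - k) (n - k - 1))).prod

/-- The submonoid of `B n` generated by the band generators `a_{t,s}`, `n ≥ t > s ≥ 1`. -/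
def bandSubmonoid (n : ℕ) : Submonoid (BraidGroup n) :=
  Submonoid.closure { x | ∃ t s : ℕ, t ≤ n ∧ s < t ∧ 1 ≤ s ∧ x = band n t s }

section Group

variable {G : Type*} [Group G]

theorem Commute.mul_conj_mul_inv {a b : G} (h : Commute a b) (x : G) :
    a * (b⁻¹ * x * b) * a⁻¹ = b⁻¹ * (a * x * a⁻¹) * b :=
  calc a * (b⁻¹ * x * b) * a⁻¹ = (a * b⁻¹) * x * (b * a⁻¹) := by group
    _ = (b⁻¹ * a) * x * (a⁻¹ * b) := by rw [h.inv_right.eq, h.symm.inv_right.eq]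
    _ = b⁻¹ * (a * x * a⁻¹) * b := by group

theorem conj_eq_inv_conj_of_braid {x y : G} (h : x * y * x = y * x * y) :
    y * x * y⁻¹ = x⁻¹ * y * x :=
  calc y * x * y⁻¹ = x⁻¹ * (x * y * x) * y⁻¹ := by group
    _ = x⁻¹ * (y * x * y) * y⁻¹ := by rw [h]
    _ = x⁻¹ * y * x := by group

end Group

section Braid

variable {n t s : ℕ}

theorem braidGen_succ {i : ℕ} (h : i < n - 1) : braidGen n (i + 1) = PresentedGroup.of ⟨i, h⟩ := by
  simp [braidGen, h]

theorem braidGen_commute {i j : ℕ} (hi : 1 ≤ i) (hij : i + 2 ≤ j) :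
    Commute (braidGen n i) (braidGen n j) := by
  obtain ⟨i, rfl⟩ : ∃ k, i = k + 1 := ⟨i - 1, by omega⟩
  obtain ⟨j, rfl⟩ : ∃ k, j = k + 1 := ⟨j - 1, by omega⟩
  by_cases hj : j < n - 1
  · rw [braidGen_succ (by omega), braidGen_succ hj]
    exact PresentedGroup.mk_eq_mk_of_mul_inv_mem
      (Or.inl ⟨⟨i, by omega⟩, ⟨j, hj⟩, by simp only; omega, by group⟩)
  · simp [braidGen, hj]

theorem braidGen_braid {i : ℕ} (hi : 1 ≤ i) (hin : i + 2 ≤ n) :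
    braidGen n i * braidGen n (i + 1) * braidGen n i =
      braidGen n (i + 1) * braidGen n i * braidGen n (i + 1) := by
  obtain ⟨i, rfl⟩ : ∃ k, i = k + 1 := ⟨i - 1, by omega⟩
  rw [braidGen_succ (by omega), braidGen_succ (by omega)]
  exact PresentedGroup.mk_eq_mk_of_mul_inv_mem
    (Or.inr ⟨⟨i, by omega⟩, ⟨i + 1, by omega⟩, rfl, rfl⟩)

theorem bandConj_of_le (h : t ≤ s + 1) : bandConj n t s = 1 := by
  simp [bandConj, show t - 1 - s = 0 by omega]

theorem bandConj_succ (h : s < t) : bandConj n (t + 1) s = braidGen n t * bandConj n t s := by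
  rw [bandConj, show t + 1 - 1 - s = (t - 1 - s) + 1 by omega, List.range_succ_eq_map,
    List.map_cons, List.prod_cons, List.map_map, bandConj]
  congr 2
  refine List.map_congr_left fun k _ => ?_
  simp only [Function.comp_apply, Nat.succ_eq_add_one]
  congr 1
  omega

theorem bandConj_split {r : ℕ} (hsr : s ≤ r) (hrt : r < t) :
    bandConj n t s = bandConj n t r * bandConj n (r + 1) s := by
  induction t, hrt using Nat.le_induction with
  | base => rw [bandConj_of_le le_rfl, one_mul]
  | succ t ht ih => rw [bandConj_succ (by omega), ih, bandConj_succ ht, mul_assoc]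

theorem bandConj_eq_mul_braidGen (h : s + 2 ≤ t) :
    bandConj n t s = bandConj n t (s + 1) * braidGen n (s + 1) := by
  rw [bandConj_split (Nat.le_succ s) (by omega), bandConj_succ (by omega), bandConj_of_le le_rfl,
    mul_one]

theorem bandConj_mem_of_forall {S : Submonoid (BraidGroup n)}
    (h : ∀ i, s < i → i < t → braidGen n i ∈ S) : bandConj n t s ∈ S := by
  refine Submonoid.list_prod_mem _ fun x hx => ?_
  obtain ⟨k, hk, rfl⟩ := List.mem_map.mp hx
  rw [List.mem_range] at hk
  exact h _ (by omega) (by omega)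

theorem commute_bandConj_of_forall {x : BraidGroup n}
    (h : ∀ i, s < i → i < t → Commute x (braidGen n i)) : Commute x (bandConj n t s) := by
  have : bandConj n t s ∈ Submonoid.centralizer {x} :=
    bandConj_mem_of_forall fun i hsi hit => Submonoid.mem_centralizer_iff.mpr fun g hg => by
      rw [Set.mem_singleton_iff.mp hg]
      exact h i hsi hit
  exact Submonoid.mem_centralizer_iff.mp this x rfl

theorem band_of_succ : band n (s + 1) s = braidGen n s := by
  rw [band, bandConj_of_le le_rfl, one_mul, inv_one, mul_one]

theorem band_succ_left (h : s < t) :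
    band n (t + 1) s = braidGen n t * band n t s * (braidGen n t)⁻¹ := by
  rw [band, band, bandConj_succ h]
  group

theorem band_succ_succ_eq_conj (hst : s < t) (htn : t + 1 ≤ n) :
    band n (t + 1) (s + 1) = (bandConj n t s)⁻¹ * braidGen n t * bandConj n t s := by
  induction t, hst using Nat.le_induction with
  | base => rw [band_of_succ, bandConj_of_le le_rfl, inv_one, one_mul, mul_one]
  | succ t hst ih =>
    have hW : Commute (braidGen n (t + 1)) (bandConj n t s) :=
      commute_bandConj_of_forall fun i _ hit => (braidGen_commute (by omega) (by omega)).symm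
    rw [band_succ_left (by omega), ih (by omega), hW.mul_conj_mul_inv,
      conj_eq_inv_conj_of_braid (braidGen_braid (by omega) htn), bandConj_succ (by omega)]
    group

theorem bandConj_succ_eq_mul_band (hst : s < t) (htn : t + 1 ≤ n) :
    bandConj n (t + 1) s = bandConj n t s * band n (t + 1) (s + 1) := by
  rw [band_succ_succ_eq_conj hst htn, bandConj_succ hst]
  group

theorem band_mul_braidGen (hs : 1 ≤ s) (hst : s + 1 < t) :
    band n t (s + 1) * braidGen n s = band n t s * band n t (s + 1) := by
  have hC : Commute (braidGen n s) (bandConj n t (s + 1)) :=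
    commute_bandConj_of_forall fun i hsi _ => braidGen_commute hs (by omega)
  rw [band, band, bandConj_eq_mul_braidGen hst]
  set C := bandConj n t (s + 1)
  calc C * braidGen n (s + 1) * C⁻¹ * braidGen n s
      = C * braidGen n (s + 1) * (C⁻¹ * braidGen n s) := by group
    _ = C * braidGen n (s + 1) * (braidGen n s * C⁻¹) := by rw [hC.symm.inv_left.eq]
    _ = _ := by group

theorem braidGen_commute_band {j : ℕ} (hj : 1 ≤ j) (hjs : j + 2 ≤ s) :
    Commute (braidGen n j) (band n t s) := by
  have hC : Commute (braidGen n j) (bandConj n t s) :=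
    commute_bandConj_of_forall fun i hsi _ => braidGen_commute hj (by omega)
  exact (hC.mul_right (braidGen_commute hj hjs)).mul_right hC.inv_right

theorem fundamentalBraid_eq_bandConj : fundamentalBraid n = bandConj n n 0 := by
  rw [fundamentalBraid, bandConj, Nat.sub_zero]
  refine congrArg List.prod (List.map_congr_left fun k hk => ?_)
  obtain ⟨m, hm⟩ : ∃ m, n - k = m + 1 := ⟨n - k - 1, by simp at hk; omega⟩
  rw [hm, Nat.add_sub_cancel, band_of_succ]
  congr 1
  omega

theorem band_mem_bandSubmonoid (hs : 1 ≤ s) (hst : s < t) (htn : t ≤ n) :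
    band n t s ∈ bandSubmonoid n :=
  Submonoid.subset_closure ⟨t, s, htn, hst, hs, rfl⟩

theorem bandConj_mem_bandSubmonoid (htn : t ≤ n) : bandConj n t s ∈ bandSubmonoid n :=
  bandConj_mem_of_forall fun i hsi hit => band_of_succ (n := n) ▸
    band_mem_bandSubmonoid (by omega) (Nat.lt_succ_self i) (by omega)

theorem band_mul_bandConj_mul_inv_mem (hs : 1 ≤ s) (hst : s < t) (htn : t ≤ n) :
    band n t s * bandConj n s 0 * (band n t s)⁻¹ ∈ bandSubmonoid n := by
  obtain _ | _ | s := s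
  · omega
  · simp [bandConj_of_le]
  set a := band n t (s + 2)
  have hmul : a * braidGen n (s + 1) = band n t (s + 1) * a := band_mul_braidGen (by omega) hst
  have hcomm : Commute a (bandConj n (s + 1) 0) :=
    commute_bandConj_of_forall fun i hi his => (braidGen_commute_band hi (by omega)).symm
  have hconj : a * bandConj n (s + 2) 0 * a⁻¹ = band n t (s + 1) * bandConj n (s + 1) 0 :=
    calc a * bandConj n (s + 2) 0 * a⁻¹
        = (a * braidGen n (s + 1)) * bandConj n (s + 1) 0 * a⁻¹ := by
          rw [bandConj_succ (by omega)]; group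
      _ = band n t (s + 1) * (a * bandConj n (s + 1) 0) * a⁻¹ := by rw [hmul]; group
      _ = band n t (s + 1) * bandConj n (s + 1) 0 := by rw [hcomm.eq]; group
  rw [hconj]
  exact mul_mem (band_mem_bandSubmonoid (by omega) (by omega) htn)
    (bandConj_mem_bandSubmonoid (by omega))

end Braid

theorem delta_mul_band_inv_positive_general (n t s : ℕ)
    (htn : t ≤ n) (hst : s < t) (hs : 1 ≤ s) :
    fundamentalBraid n * (band n t s)⁻¹ ∈ bandSubmonoid n := by
  obtain ⟨s, rfl⟩ : ∃ r, s = r + 1 := ⟨s - 1, by omega⟩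
  obtain ⟨t, rfl⟩ : ∃ r, t = r + 1 := ⟨t - 1, by omega⟩
  have hδ : fundamentalBraid n =
      bandConj n n t * bandConj n t s * band n (t + 1) (s + 1) * bandConj n (s + 1) 0 := by
    rw [fundamentalBraid_eq_bandConj, bandConj_split (Nat.zero_le t) (by omega),
      bandConj_split (Nat.zero_le s) (by omega : s < t + 1),
      bandConj_succ_eq_mul_band (by omega) htn]
    group
  rw [hδ, show ∀ x y a z : BraidGroup n, x * y * a * z * a⁻¹ = x * y * (a * z * a⁻¹) by
    intros; group]
  exact mul_mem
    (mul_mem (bandConj_mem_bandSubmonoid le_rfl) (bandConj_mem_bandSubmonoid (by omega)))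
    (band_mul_bandConj_mul_inv_mem hs hst htn)

/-- For `n ≥ 2` and `n ≥ t > s ≥ 1`, the element `δ · a_{t,s}⁻¹` lies
in the submonoid of `B n` generated by the band generators; equivalently there is a
positive word `P_{t,s}` in the band generators with `a_{t,s}⁻¹ = δ⁻¹ P_{t,s}`. -/
theorem delta_mul_band_inv_positive (n t s : ℕ) (hn : 2 ≤ n)
    (htn : t ≤ n) (hst : s < t) (hs : 1 ≤ s) :
    fundamentalBraid n * (band n t s)⁻¹ ∈ bandSubmonoid n :=
  delta_mul_band_inv_positive_general n t s htn hst hs
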